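/- Let L be self-adjoint on H with L ≥ κ·I, κ > 0, spectral measure dQ_λ. Fix r > 0, a nonzero y ∈ H, and let h_ε(t) = φ_ε(t)·y with φ_ε as the approximate δ'(t−r) defined by φ_ε = 0 on [0,r−2ε), 1/ε² on [r−2ε,r−ε), −1/ε² on [r−ε,r), 0 on [r,∞). Then the Duhamel solutions satisfy ‖y − v^{h_ε}(r)‖² = ∫_κ^∞ |1 − ψ_ε(λ)|² d‖Q_λ y‖², and hence v^{h_ε}(r) → y in H as ε → 0. Consequently, every closed subspace A ⊆ H satisfies A ⊆ closure{v^h(r) : h ∈ L²_loc((0,∞); A)} for every r > 0. -/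

import Mathlib

/-!
On the spectrum of `L`, which lies in `[κ, ∞)`, the functional calculus turns the Duhamel
integral into `v^{h_ε}(r) = ψ_ε(L) y`, and the elementary integral gives
`ψ_ε(λ) = ψ(ε √λ)` with `ψ θ = cos θ · sinc²(θ/2)`. Hence
`‖y - v^{h_ε}(r)‖² = ∫ (1 - ψ(ε √λ))² dν_y(λ)`. Since `ψ` is continuous, bounded by `1` and
`ψ 0 = 1`, dominated convergence sends this integral to `0` as `ε → 0`. As `h_ε` takes values
in `ℝ y ⊆ A`, the states `v^{h_ε}(r)` lie in the reachable set and converge to `y`.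
-/

open scoped InnerProductSpace
open MeasureTheory Filter Topology

/-- The Duhamel propagator `L^{-1/2} sin(t L^{1/2})` via the functional calculus. -/
noncomputable def duhamelKernel {H : Type*} [NormedAddCommGroup H]
    [InnerProductSpace ℂ H] [CompleteSpace H] (L : H →L[ℂ] H) (t : ℝ) : H →L[ℂ] H :=
  cfc (fun lam : ℝ => Real.sin (Real.sqrt lam * t) / Real.sqrt lam) L

/-- The trajectory `v^h(t) = ∫₀ᵗ L^{-1/2} sin((t-s)L^{1/2}) h(s) ds`. -/
noncomputable def trajectory {H : Type*} [NormedAddCommGroup H]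
    [InnerProductSpace ℂ H] [CompleteSpace H] (L : H →L[ℂ] H) (h : ℝ → H) (t : ℝ) : H :=
  ∫ s in (0 : ℝ)..t, duhamelKernel L (t - s) (h s)

/-- The approximation `φ_ε` of `δ'(t - r)`. -/
noncomputable def phiApprox (r ε t : ℝ) : ℝ :=
  if t < r - 2 * ε then 0
  else if t < r - ε then 1 / ε ^ 2
  else if t < r then -(1 / ε ^ 2)
  else 0

/-- `ψ_ε(λ) = ∫₀ʳ (sin(√λ(r-t))/√λ) φ_ε(t) dt`. -/
noncomputable def psiApprox (r ε lam : ℝ) : ℝ :=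
  ∫ t in (0 : ℝ)..r, Real.sin (Real.sqrt lam * (r - t)) / Real.sqrt lam * phiApprox r ε t

open Set Function ContinuousMap

section IntegralCFC

variable {X A : Type*} {p : A → Prop} [MeasurableSpace X] [TopologicalSpace X] [T2Space X]
  [OpensMeasurableSpace X] {μ : Measure X}
  [NormedRing A] [StarRing A] [NormedAlgebra ℝ A] [ContinuousFunctionalCalculus ℝ A p]
  [CompleteSpace A] {K : Set X} {g : X → ℝ} {f : X → ℝ → ℝ}

lemma integrableOn_mkD_restrict_mul (hK : IsCompact K) (hKm : MeasurableSet K) {t : Set ℝ}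
    [CompactSpace t] (hg : IntegrableOn g K μ) (hf : ContinuousOn (uncurry f) (K ×ˢ t)) :
    IntegrableOn (fun x => mkD (t.domRestrict (fun z => g x * f x z)) 0) K μ := by
  refine (hg.smul_continuousOn (continuousOn_mkD_restrict_of_uncurry _ 0 hf) hK).congr_fun
    (fun x hx => ?_) hKm
  have hfx := hf.uncurry_left x hx
  ext z
  rw [mkD_apply_of_continuousOn (f := fun z => g x * f x z) (continuousOn_const.mul hfx)]
  simp [mkD_apply_of_continuousOn hfx]

lemma cfc_setIntegral_mul (hK : IsCompact K) (hKm : MeasurableSet K) {a : A}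
    (hg : IntegrableOn g K μ) (hf : ContinuousOn (uncurry f) (K ×ˢ spectrum ℝ a))
    (ha : p a := by cfc_tac) :
    cfc (fun z => ∫ x in K, g x * f x z ∂μ) a = ∫ x in K, g x • cfc (f x) a ∂μ := by
  have := isCompact_iff_compactSpace.1
    (ContinuousFunctionalCalculus.isCompact_spectrum (R := ℝ) (p := p) a)
  rw [cfc_setIntegral' _ a ?_ (integrableOn_mkD_restrict_mul hK hKm hg hf) ha]
  · exact setIntegral_congr_fun hKm fun x hx => cfc_const_mul _ _ _ (hf.uncurry_left x hx)
  · exact ae_restrict_of_forall_mem hKm fun x hx => continuousOn_const.mul (hf.uncurry_left x hx)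

lemma integrableOn_smul_cfc (hK : IsCompact K) (hKm : MeasurableSet K) {a : A}
    (hg : IntegrableOn g K μ) (hf : ContinuousOn (uncurry f) (K ×ˢ spectrum ℝ a))
    (ha : p a := by cfc_tac) :
    IntegrableOn (fun x => g x • cfc (f x) a) K μ := by
  have := isCompact_iff_compactSpace.1
    (ContinuousFunctionalCalculus.isCompact_spectrum (R := ℝ) (p := p) a)
  exact (integrableOn_cfc' _ a (integrableOn_mkD_restrict_mul hK hKm hg hf) ha).congr_fun
    (fun x hx => cfc_const_mul _ _ _ (hf.uncurry_left x hx)) hKm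

end IntegralCFC

section PiecewiseConstant

variable {E : Type*} [NormedAddCommGroup E] [NormedSpace ℝ E] {g : ℝ → ℝ} {W : ℝ → E}
  {a b c : ℝ}

lemma intervalIntegral_smul_of_eqOn_Ioo (hab : a ≤ b) (hg : EqOn g (fun _ => c) (Ioo a b)) :
    ∫ s in a..b, g s • W s = c • ∫ s in a..b, W s := by
  rw [← intervalIntegral.integral_smul]
  exact intervalIntegral.integral_congr_Ioo_of_le hab fun s hs => by rw [hg hs]

lemma IntervalIntegrable.smul_of_eqOn_Ioo (hW : IntervalIntegrable W volume a b) (hab : a ≤ b)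
    (hg : EqOn g (fun _ => c) (Ioo a b)) :
    IntervalIntegrable (fun s => g s • W s) volume a b :=
  (hW.smul c).congr_uIoo fun s hs => by rw [uIoo_of_le hab] at hs; simp [hg hs]

lemma abs_phiApprox_le (r ε t : ℝ) : |phiApprox r ε t| ≤ 1 / ε ^ 2 := by
  unfold phiApprox
  split_ifs <;> simp [abs_of_nonneg, sq_nonneg]

lemma measurable_phiApprox (r ε : ℝ) : Measurable (phiApprox r ε) := by
  unfold phiApprox
  exact .ite measurableSet_Iio measurable_const (.ite measurableSet_Iio measurable_const
    (.ite measurableSet_Iio measurable_const measurable_const))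

lemma locallyIntegrable_phiApprox (r ε : ℝ) : LocallyIntegrable (phiApprox r ε) :=
  (locallyIntegrable_const (1 / ε ^ 2)).mono (measurable_phiApprox r ε).aestronglyMeasurable
    (.of_forall fun t => by
      simpa [abs_of_nonneg (by positivity : (0 : ℝ) ≤ 1 / ε ^ 2)] using abs_phiApprox_le r ε t)

lemma intervalIntegral_phiApprox_smul {r ε : ℝ} (hε : 0 < ε) (h2ε : 2 * ε ≤ r)
    (hW : LocallyIntegrable W) :
    ∫ s in 0..r, phiApprox r ε s • W s =
      (1 / ε ^ 2) • ((∫ s in (r - 2 * ε)..(r - ε), W s) - ∫ s in (r - ε)..r, W s) := by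
  have h₀ : 0 ≤ r - 2 * ε := by linarith
  have h₁ : r - 2 * ε ≤ r - ε := by linarith
  have h₂ : r - ε ≤ r := by linarith
  have e₀ : EqOn (phiApprox r ε) (fun _ => 0) (Ioo 0 (r - 2 * ε)) := fun s hs => by
    simp [phiApprox, hs.2]
  have e₁ : EqOn (phiApprox r ε) (fun _ => 1 / ε ^ 2) (Ioo (r - 2 * ε) (r - ε)) := fun s hs => by
    simp [phiApprox, hs.2, hs.1.not_gt]
  have e₂ : EqOn (phiApprox r ε) (fun _ => -(1 / ε ^ 2)) (Ioo (r - ε) r) := fun s hs => by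
    simp [phiApprox, hs.2, hs.1.not_gt, (h₁.trans_lt hs.1).not_gt]
  have hi : ∀ {u v c}, u ≤ v → EqOn (phiApprox r ε) (fun _ => c) (Ioo u v) →
      IntervalIntegrable (fun s => phiApprox r ε s • W s) volume u v := fun huv he =>
    (hW.integrableOn_isCompact isCompact_uIcc).intervalIntegrable.smul_of_eqOn_Ioo huv he
  rw [← intervalIntegral.integral_add_adjacent_intervals (hi h₀ e₀) ((hi h₁ e₁).trans (hi h₂ e₂)),
    ← intervalIntegral.integral_add_adjacent_intervals (hi h₁ e₁) (hi h₂ e₂),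
    intervalIntegral_smul_of_eqOn_Ioo h₀ e₀, intervalIntegral_smul_of_eqOn_Ioo h₁ e₁,
    intervalIntegral_smul_of_eqOn_Ioo h₂ e₂]
  module

end PiecewiseConstant

section Profile

open Real

/-- The paper's closed form `(2 cos θ - cos 2θ - 1) / θ²` of `ψ_ε(λ)` at `θ = ε √λ`
(`psiProfile_of_ne_zero`), rewritten with `1 - cos θ = 2 sin² (θ/2)` so that it is continuous
at `θ = 0`. -/
noncomputable def psiProfile (θ : ℝ) : ℝ := cos θ * sinc (θ / 2) ^ 2

@[fun_prop]
lemma continuous_psiProfile : Continuous psiProfile := by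
  unfold psiProfile
  fun_prop

@[simp] lemma psiProfile_zero : psiProfile 0 = 1 := by simp [psiProfile]

lemma abs_psiProfile_le_one (θ : ℝ) : |psiProfile θ| ≤ 1 := by
  rw [psiProfile, abs_mul, abs_pow]
  exact mul_le_one₀ (abs_cos_le_one θ) (by positivity)
    (pow_le_one₀ (abs_nonneg _) (abs_sinc_le_one _))

lemma psiProfile_of_ne_zero {θ : ℝ} (hθ : θ ≠ 0) :
    psiProfile θ = (2 * cos θ - cos (2 * θ) - 1) / θ ^ 2 := by
  have h : cos θ = 1 - 2 * sin (θ / 2) ^ 2 := by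
    rw [← cos_two_mul_eq_one_sub, mul_div_cancel₀ θ two_ne_zero]
  rw [psiProfile, sinc_of_ne_zero (div_ne_zero hθ two_ne_zero), cos_two_mul, h]
  field_simp
  ring

lemma intervalIntegral_sin_mul_sub_div {c : ℝ} (hc : c ≠ 0) (r a b : ℝ) :
    ∫ s in a..b, sin (c * (r - s)) / c = (cos (c * (r - b)) - cos (c * (r - a))) / c ^ 2 := by
  have hderiv (s : ℝ) :
      HasDerivAt (fun s => cos (c * (r - s)) / c ^ 2) (sin (c * (r - s)) / c) s := by
    refine ((((hasDerivAt_id s).const_sub r).const_mul c).cos.div_const (c ^ 2)).congr_deriv ?_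
    simp only [id]
    field_simp
  rw [intervalIntegral.integral_eq_sub_of_hasDerivAt (fun s _ => hderiv s)
    ((by fun_prop : Continuous fun s => sin (c * (r - s)) / c).intervalIntegrable _ _)]
  ring

lemma psiApprox_eq_psiProfile {r ε lam : ℝ} (hε : 0 < ε) (h2ε : 2 * ε ≤ r) (hlam : 0 < lam) :
    psiApprox r ε lam = psiProfile (√lam * ε) := by
  have hc : √lam ≠ 0 := (sqrt_pos.2 hlam).ne'
  unfold psiApprox
  simp_rw [mul_comm _ (phiApprox r ε _), ← smul_eq_mul (phiApprox r ε _)]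
  rw [intervalIntegral_phiApprox_smul hε h2ε
      (by fun_prop : Continuous fun s => sin (√lam * (r - s)) / √lam).locallyIntegrable,
    intervalIntegral_sin_mul_sub_div hc, intervalIntegral_sin_mul_sub_div hc,
    psiProfile_of_ne_zero (mul_ne_zero hc hε.ne')]
  simp only [sub_sub_cancel, sub_self, mul_zero, cos_zero, smul_eq_mul]
  field_simp
  ring_nf

lemma tendsto_integral_one_sub_psiProfile_sq (μ : Measure ℝ) [IsFiniteMeasure μ] :
    Tendsto (fun ε => ∫ lam, (1 - psiProfile (√lam * ε)) ^ 2 ∂μ) (𝓝 0) (𝓝 0) := by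
  have hcont : Continuous fun ε => ∫ lam, (1 - psiProfile (√lam * ε)) ^ 2 ∂μ := by
    refine continuous_of_dominated (bound := fun _ => 4) (fun ε => ?_) (fun ε => ?_)
      (integrable_const 4) (.of_forall fun lam => by fun_prop)
    · exact (by fun_prop : Continuous fun lam => (1 - psiProfile (√lam * ε)) ^ 2)
        |>.aestronglyMeasurable
    · refine .of_forall fun lam => ?_
      have := abs_le.1 (abs_psiProfile_le_one (√lam * ε))
      rw [Real.norm_eq_abs, abs_of_nonneg (sq_nonneg _)]
      nlinarith
  simpa using hcont.tendsto 0

end Profile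

section Hilbert

variable {H : Type*} [NormedAddCommGroup H] [InnerProductSpace ℂ H] [CompleteSpace H]
  {L : H →L[ℂ] H}

lemma spectrum_subset_Ici_of_coercive (hL : IsSelfAdjoint L) {κ : ℝ}
    (hLκ : ∀ x : H, κ * ‖x‖ ^ 2 ≤ (⟪L x, x⟫_ℂ).re) : spectrum ℝ L ⊆ Ici κ := by
  have hκL : algebraMap ℝ (H →L[ℂ] H) κ ≤ L := by
    refine ⟨(hL.sub (.algebraMap _ (.all κ))).isSymmetric, fun x => ?_⟩
    rw [ContinuousLinearMap.reApplyInnerSelf_apply]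
    simpa [Algebra.algebraMap_eq_smul_one, inner_sub_left, ← Complex.coe_smul, inner_smul_left,
      ← inner_self_eq_norm_sq (𝕜 := ℂ)] using hLκ x
  exact fun x hx => (algebraMap_le_iff_le_spectrum hL).1 hκL x hx

lemma trajectory_smul_eq_cfc (hL : IsSelfAdjoint L) (hspec : spectrum ℝ L ⊆ Ioi 0) {g : ℝ → ℝ}
    (hg : LocallyIntegrable g) {t : ℝ} (ht : 0 ≤ t) (y : H) :
    trajectory L (fun s => g s • y) t =
      cfc (fun lam => ∫ s in 0..t, Real.sin (√lam * (t - s)) / √lam * g s) L y := by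
  have hf : ContinuousOn (uncurry fun s lam => Real.sin (√lam * (t - s)) / √lam)
      (Icc 0 t ×ˢ spectrum ℝ L) := by
    refine ContinuousOn.mono (s := univ ×ˢ Ioi 0) ?_ (prod_mono (subset_univ _) hspec)
    exact ContinuousOn.div (by fun_prop) (by fun_prop) fun p hp => (Real.sqrt_pos.2 hp.2).ne'
  have hgK := hg.integrableOn_isCompact (isCompact_Icc (a := 0) (b := t))
  calc trajectory L (fun s => g s • y) t
      = ∫ s in Icc 0 t, (g s • duhamelKernel L (t - s)) y := by
        rw [trajectory, intervalIntegral.integral_of_le ht, integral_Icc_eq_integral_Ioc]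
        simp only [ContinuousLinearMap.map_smul_of_tower, _root_.smul_apply]
    _ = (∫ s in Icc 0 t, g s • duhamelKernel L (t - s)) y :=
        (ContinuousLinearMap.integral_apply
          (integrableOn_smul_cfc isCompact_Icc measurableSet_Icc hgK hf) y).symm
    _ = _ := by
        unfold duhamelKernel
        rw [← cfc_setIntegral_mul isCompact_Icc measurableSet_Icc hgK hf]
        simp_rw [intervalIntegral.integral_of_le ht, ← integral_Icc_eq_integral_Ioc, mul_comm (g _)]

lemma trajectory_phiApprox_smul (hL : IsSelfAdjoint L) (hspec : spectrum ℝ L ⊆ Ioi 0) {r : ℝ}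
    (hr : 0 ≤ r) (ε : ℝ) (y : H) :
    trajectory L (fun t => phiApprox r ε t • y) r = cfc (psiApprox r ε) L y :=
  trajectory_smul_eq_cfc hL hspec (locallyIntegrable_phiApprox r ε) hr y

lemma norm_cfc_apply_sq (hL : IsSelfAdjoint L) {f : ℝ → ℝ} (hf : ContinuousOn f (spectrum ℝ L))
    (y : H) : ‖cfc f L y‖ ^ 2 = (⟪cfc (fun lam => f lam ^ 2) L y, y⟫_ℂ).re := by
  rw [cfc_pow f 2 L hf hL, pow_two (cfc f L), mul_apply_eq_comp,
    ← ContinuousLinearMap.adjoint_inner_right, (cfc_predicate f L).adjoint_eq]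
  exact (inner_self_eq_norm_sq (𝕜 := ℂ) _).symm

lemma norm_sub_cfc_apply_sq (hL : IsSelfAdjoint L) {f : ℝ → ℝ} (hf : Continuous f) {y : H}
    {μ : Measure ℝ} (hμ : ∀ g : ℝ → ℝ, Continuous g → (⟪cfc g L y, y⟫_ℂ).re = ∫ lam, g lam ∂μ) :
    ‖y - cfc f L y‖ ^ 2 = ∫ lam, (1 - f lam) ^ 2 ∂μ := by
  have : y - cfc f L y = cfc (fun lam => 1 - f lam) L y := by
    rw [cfc_sub _ _ L, cfc_const_one ℝ L, _root_.sub_apply, one_apply_eq_self]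
  rw [this, norm_cfc_apply_sq hL (by fun_prop), hμ _ (by fun_prop)]

lemma norm_sub_trajectory_phiApprox_sq (hL : IsSelfAdjoint L) (hspec : spectrum ℝ L ⊆ Ioi 0)
    {y : H} {μ : Measure ℝ}
    (hμ : ∀ g : ℝ → ℝ, Continuous g → (⟪cfc g L y, y⟫_ℂ).re = ∫ lam, g lam ∂μ)
    {r ε : ℝ} (hε : 0 < ε) (h2ε : 2 * ε ≤ r) :
    ‖y - trajectory L (fun t => phiApprox r ε t • y) r‖ ^ 2 =
      ∫ lam, (1 - psiProfile (√lam * ε)) ^ 2 ∂μ := by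
  rw [trajectory_phiApprox_smul hL hspec (by linarith) ε y,
    cfc_congr fun lam hlam => psiApprox_eq_psiProfile hε h2ε (hspec hlam),
    norm_sub_cfc_apply_sq hL (by fun_prop) hμ]

end Hilbert

theorem wave_approximation_of_states_general
    (H : Type*) [NormedAddCommGroup H] [InnerProductSpace ℂ H] [CompleteSpace H]
    (L : H →L[ℂ] H) (hLsa : IsSelfAdjoint L)
    (κ : ℝ) (hκ : 0 < κ) (hLκ : ∀ x : H, κ * ‖x‖ ^ 2 ≤ (⟪L x, x⟫_ℂ).re)
    (ν : H → Measure ℝ)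
    (hνfin : ∀ y : H, (ν y) Set.univ = ENNReal.ofReal (‖y‖ ^ 2))
    (hνsupp : ∀ y : H, (ν y) (Set.Iio κ) = 0)
    (hνcfc : ∀ (f : ℝ → ℝ), Continuous f → ∀ y : H,
      (⟪cfc f L y, y⟫_ℂ).re = ∫ lam, f lam ∂(ν y))
    (r : ℝ) (hr : 0 < r) (y : H) :
    (∀ ε : ℝ, 0 < ε → 2 * ε < r →
      ‖y - trajectory L (fun t => phiApprox r ε t • y) r‖ ^ 2 =
        ∫ lam, (1 - psiApprox r ε lam) ^ 2 ∂(ν y)) ∧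
    Tendsto (fun ε : ℝ => trajectory L (fun t => phiApprox r ε t • y) r)
      (nhdsWithin 0 (Set.Ioi 0)) (nhds y) ∧
    (∀ A : Submodule ℂ H, IsClosed (A : Set H) → y ∈ A →
      y ∈ closure {v : H | ∃ h : ℝ → H, LocallyIntegrable h volume ∧
        (∀ s : ℝ, h s ∈ A) ∧ v = trajectory L h r}) := by
  have hspec : spectrum ℝ L ⊆ Ioi 0 := fun x hx =>
    hκ.trans_le (spectrum_subset_Ici_of_coercive hLsa hLκ hx)
  have hνpos : ∀ᵐ lam ∂(ν y), 0 < lam :=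
    (measure_eq_zero_iff_ae_notMem.1 (hνsupp y)).mono fun lam h => hκ.trans_le (not_lt.1 h)
  have : IsFiniteMeasure (ν y) := ⟨by simp [hνfin]⟩
  have hnorm {ε : ℝ} (hε : 0 < ε) (h2ε : 2 * ε ≤ r) :=
    norm_sub_trajectory_phiApprox_sq hLsa hspec (hνcfc · · y) hε h2ε
  have hlim : Tendsto (fun ε => trajectory L (fun t => phiApprox r ε t • y) r) (𝓝[>] 0) (𝓝 y) := by
    have hsq : Tendsto (fun ε => ‖y - trajectory L (fun t => phiApprox r ε t • y) r‖ ^ 2)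
        (𝓝[>] 0) (𝓝 0) := by
      refine ((tendsto_integral_one_sub_psiProfile_sq (ν y)).mono_left nhdsWithin_le_nhds).congr' ?_
      filter_upwards [Ioo_mem_nhdsGT (half_pos hr)] with ε hε
      exact (hnorm hε.1 (by linarith [hε.2])).symm
    rw [tendsto_iff_norm_sub_tendsto_zero]
    simpa [norm_sub_rev, Real.sqrt_sq (norm_nonneg _)] using hsq.sqrt
  refine ⟨fun ε hε h2ε => ?_, hlim, fun A _ hyA => ?_⟩
  · rw [hnorm hε h2ε.le]
    exact integral_congr_ae (hνpos.mono fun lam hlam => by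
      simp only [psiApprox_eq_psiProfile hε h2ε.le hlam])
  · refine mem_closure_of_tendsto hlim (.of_forall fun ε => ?_)
    exact ⟨_, locallyIntegrable_iff.2 fun K hK =>
      ((locallyIntegrable_phiApprox r ε).integrableOn_isCompact hK).smul_const y,
      fun s => A.smul_of_tower_mem _ hyA, rfl⟩

/-- with `h_ε(t) = φ_ε(t)·y`, one has
`‖y − v^{h_ε}(r)‖² = ∫ |1 − ψ_ε(λ)|² d‖Q_λ y‖²` (here `ν y` is the scalar spectral
measure `d‖Q_λ y‖²` of `L` at `y`), hence `v^{h_ε}(r) → y` as `ε → 0⁺`; consequently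
every closed subspace `A` is contained in the closure of its reachable set at any
time `r > 0`. -/
theorem wave_approximation_of_states
    (H : Type*) [NormedAddCommGroup H] [InnerProductSpace ℂ H] [CompleteSpace H]
    (L : H →L[ℂ] H) (hLsa : IsSelfAdjoint L)
    (κ : ℝ) (hκ : 0 < κ) (hLκ : ∀ x : H, κ * ‖x‖ ^ 2 ≤ (⟪L x, x⟫_ℂ).re)
    (ν : H → Measure ℝ)
    (hνfin : ∀ y : H, (ν y) Set.univ = ENNReal.ofReal (‖y‖ ^ 2))
    (hνsupp : ∀ y : H, (ν y) (Set.Iio κ) = 0)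
    (hνcfc : ∀ (f : ℝ → ℝ), Continuous f → ∀ y : H,
      (⟪cfc f L y, y⟫_ℂ).re = ∫ lam, f lam ∂(ν y))
    (r : ℝ) (hr : 0 < r) (y : H) (hy : y ≠ 0) :
    (∀ ε : ℝ, 0 < ε → 2 * ε < r →
      ‖y - trajectory L (fun t => phiApprox r ε t • y) r‖ ^ 2 =
        ∫ lam, (1 - psiApprox r ε lam) ^ 2 ∂(ν y)) ∧
    Tendsto (fun ε : ℝ => trajectory L (fun t => phiApprox r ε t • y) r)
      (nhdsWithin 0 (Set.Ioi 0)) (nhds y) ∧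
    (∀ A : Submodule ℂ H, IsClosed (A : Set H) → y ∈ A →
      y ∈ closure {v : H | ∃ h : ℝ → H, LocallyIntegrable h volume ∧
        (∀ s : ℝ, h s ∈ A) ∧ v = trajectory L h r}) :=
  wave_approximation_of_states_general H L hLsa κ hκ hLκ ν hνfin hνsupp hνcfc r hr y
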